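/- Let E be a Hilbert C*-module over a unital C*-algebra satisfying property [H] and C ∈ K(E) compact. If L = I − C is not injective, then Ker(L) is a nonzero finitely generated submodule and Ran(L) is a proper closed submodule of E. -/

import Mathlib

set_option linter.unusedSectionVars false
set_option maxHeartbeats 1000000


open scoped RightActions
open CStarModule Filter Topology

/-- The December 2024 Mathlib `CStarModule` (right Hilbert C*-module: `A`-valued inner product,
right action `Aᵐᵒᵖ`, `⟪x, y <• a⟫ = ⟪x, y⟫ * a`), restored under a new name since Mathlib's
`CStarModule` now describes left modules. -/
class OldCStarModule (A E : Type*) [NonUnitalSemiring A] [StarRing A] [Module ℂ A]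
    [AddCommGroup E] [Module ℂ E] [PartialOrder A] [SMul Aᵐᵒᵖ E] [Norm A] [Norm E]
    extends Inner A E where
  inner_add_right {x} {y} {z} : inner x (y + z) = inner x y + inner x z
  inner_self_nonneg {x} : 0 ≤ inner x x
  inner_self {x} : inner x x = 0 ↔ x = 0
  inner_op_smul_right {a : A} {x y : E} : inner x (y <• a) = inner x y * a
  inner_smul_right_complex {z : ℂ} {x} {y} : inner x (z • y) = z • inner x y
  star_inner x y : star (inner x y) = inner y x
  norm_eq_sqrt_norm_inner_self x : ‖x‖ = Real.sqrt ‖inner x x‖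

section
variable (A E : Type*) [CStarAlgebra A] [PartialOrder A] [StarOrderedRing A]
  [NormedAddCommGroup E] [NormedSpace ℂ E] [Module Aᵐᵒᵖ E] [OldCStarModule A E]

/-- The rank-one operator predicate: `T = θ_{u,v}`, i.e. `T z = u⟪v, z⟫`. -/
def IsRankOne (T : E →L[ℂ] E) : Prop := ∃ u v : E, ∀ z, T z = u <• (inner (𝕜 := A) v z)

/-- The set `K(E)` of compact operators: the closure of the linear span of rank-one operators. -/
def compactOp : Set (E →L[ℂ] E) :=
  closure (Submodule.span ℂ {T : E →L[ℂ] E | IsRankOne A E T} : Set (E →L[ℂ] E))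

/-- Property [H]: every bounded sequence has a weakly convergent subsequence. -/
def PropertyH : Prop :=
  ∀ ζ : ℕ → E, Bornology.IsBounded (Set.range ζ) →
    ∃ φ : ℕ → ℕ, StrictMono φ ∧ ∃ z : E, ∀ v : E,
      Tendsto (fun k => inner (𝕜 := A) v (ζ (φ k))) atTop (nhds (inner (𝕜 := A) v z))

variable {A E}

local notation "⟪" x ", " y "⟫" => inner (𝕜 := A) x y

theorem OldCStarModule.inner_sub_right {x y z : E} : ⟪x, y - z⟫ = ⟪x, y⟫ - ⟪x, z⟫ := by
  have h : y - z = y + (-1 : ℂ) • z := by rw [neg_one_smul, sub_eq_add_neg]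
  rw [h, OldCStarModule.inner_add_right, OldCStarModule.inner_smul_right_complex, neg_one_smul,
    sub_eq_add_neg]

theorem OldCStarModule.inner_op_smul_left {a : A} {x y : E} : ⟪x <• a, y⟫ = star a * ⟪x, y⟫ := by
  rw [← OldCStarModule.star_inner y, OldCStarModule.inner_op_smul_right, star_mul,
    OldCStarModule.star_inner]

theorem OldCStarModule.inner_sub_left {x y z : E} : ⟪x - y, z⟫ = ⟪x, z⟫ - ⟪y, z⟫ := by
  rw [← OldCStarModule.star_inner z, OldCStarModule.inner_sub_right, star_sub,
    OldCStarModule.star_inner, OldCStarModule.star_inner]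

theorem OldCStarModule.inner_ofReal_smul_right {t : ℝ} {x y : E} :
    ⟪x, (t : ℂ) • y⟫ = t • ⟪x, y⟫ := by
  rw [OldCStarModule.inner_smul_right_complex, Complex.coe_smul]

theorem OldCStarModule.inner_ofReal_smul_left {t : ℝ} {x y : E} :
    ⟪(t : ℂ) • x, y⟫ = t • ⟪x, y⟫ := by
  rw [← OldCStarModule.star_inner y, OldCStarModule.inner_ofReal_smul_right, star_smul,
    OldCStarModule.star_inner, star_trivial]

theorem OldCStarModule.norm_sq_eq {x : E} : ‖x‖ ^ 2 = ‖⟪x, x⟫‖ := by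
  rw [OldCStarModule.norm_eq_sqrt_norm_inner_self (A := A) x, Real.sq_sqrt (norm_nonneg _)]

theorem OldCStarModule.inner_mul_inner_swap_le' {x y : E} :
    ⟪y, x⟫ * ⟪x, y⟫ ≤ ‖x‖ ^ 2 • ⟪y, y⟫ := by
  rcases eq_or_ne x 0 with h | h
  · have h0 : ⟪x, y⟫ = 0 := by
      rw [h, ← sub_self (0 : E), OldCStarModule.inner_sub_left, sub_self]
    rw [h0, mul_zero]
    exact smul_nonneg (by positivity) OldCStarModule.inner_self_nonneg
  · set t : ℝ := ‖x‖ ^ 2 with ht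
    set a : A := ⟪x, y⟫ with ha
    have hsa : star a = ⟪y, x⟫ := OldCStarModule.star_inner x y
    have h1 : (0 : A) ≤ star a * ⟪x, x⟫ * a - t • (star a * a) - t • (star a * a)
        + t • (t • ⟪y, y⟫) := by
      calc (0 : A) ≤ ⟪x <• a - (t : ℂ) • y, x <• a - (t : ℂ) • y⟫ :=
            OldCStarModule.inner_self_nonneg
        _ = star a * ⟪x, x⟫ * a - t • (star a * a) - t • (star a * a)
            + t • (t • ⟪y, y⟫) := by
            simp only [OldCStarModule.inner_sub_right, OldCStarModule.inner_sub_left,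
              OldCStarModule.inner_op_smul_left, OldCStarModule.inner_op_smul_right,
              OldCStarModule.inner_ofReal_smul_right, OldCStarModule.inner_ofReal_smul_left,
              ← hsa, ← ha, smul_mul_assoc, mul_smul_comm, smul_sub, mul_sub, sub_mul, mul_assoc]
            abel
    have h2 : star a * ⟪x, x⟫ * a ≤ t • (star a * a) := by
      calc star a * ⟪x, x⟫ * a ≤ ‖⟪x, x⟫‖ • (star a * a) :=
            CStarAlgebra.star_left_conjugate_le_norm_smul (OldCStarModule.star_inner x x)
        _ = t • (star a * a) := by rw [ht, OldCStarModule.norm_sq_eq (A := A)]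
    have h3 : t • (star a * a) ≤ t • (t • ⟪y, y⟫) := by
      have h4 := add_le_add_right h2 (- t • (star a * a) - t • (star a * a) + t • (t • ⟪y, y⟫))
      have h5 : (0 : A) ≤ t • (t • ⟪y, y⟫) - t • (star a * a) := by
        refine h1.trans (le_of_sub_nonneg ?_)
        have : t • (t • ⟪y, y⟫) - t • (star a * a) -
            (star a * ⟪x, x⟫ * a - t • (star a * a) - t • (star a * a) + t • (t • ⟪y, y⟫))
            = t • (star a * a) - star a * ⟪x, x⟫ * a := by abel
        rw [this]
        exact sub_nonneg.mpr h2
      exact sub_nonneg.mp h5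
    have htpos : 0 < t := by
      rw [ht]; exact pow_pos (norm_pos_iff.mpr h) 2
    rw [← hsa]
    exact (smul_le_smul_iff_of_pos_left htpos).mp h3

theorem OldCStarModule.norm_inner_le (E) [NormedAddCommGroup E] [NormedSpace ℂ E]
    [Module Aᵐᵒᵖ E] [OldCStarModule A E] {x y : E} : ‖⟪x, y⟫‖ ≤ ‖x‖ * ‖y‖ := by
  have := calc ‖⟪x, y⟫‖ ^ 2 = ‖⟪y, x⟫ * ⟪x, y⟫‖ := by
                rw [← OldCStarModule.star_inner x, CStarRing.norm_star_mul_self, pow_two]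
    _ ≤ ‖‖x‖ ^ 2 • ⟪y, y⟫‖ := by
                refine CStarAlgebra.norm_le_norm_of_nonneg_of_le ?_
                  OldCStarModule.inner_mul_inner_swap_le'
                rw [← OldCStarModule.star_inner x]
                exact star_mul_self_nonneg _
    _ = ‖x‖ ^ 2 * ‖⟪y, y⟫‖ := by simp [norm_smul]
    _ = ‖x‖ ^ 2 * ‖y‖ ^ 2 := by rw [OldCStarModule.norm_sq_eq (A := A) (x := y)]
    _ = (‖x‖ * ‖y‖) ^ 2 := by rw [mul_pow]
  exact (pow_le_pow_iff_left₀ (norm_nonneg _) (by positivity) (by norm_num)).mp this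

private lemma ext_inner' {x y : E} (h : ∀ v : E, ⟪v, x⟫ = ⟪v, y⟫) : x = y := by
  have h2 : ⟪x - y, x - y⟫ = 0 := by
    rw [OldCStarModule.inner_sub_right, h (x - y), sub_self]
  exact sub_eq_zero.mp (OldCStarModule.inner_self.mp h2)

private lemma smul_eq_op' (c : ℂ) (x : E) : c • x = x <• (c • (1 : A)) := by
  apply ext_inner' (A := A)
  intro v
  rw [OldCStarModule.inner_smul_right_complex, OldCStarModule.inner_op_smul_right, mul_smul_comm,
    mul_one]

private lemma smul_op_comm' (c : ℂ) (a : A) (x : E) : c • (x <• a) = (c • x) <• a := by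
  apply ext_inner' (A := A)
  intro v
  rw [OldCStarModule.inner_smul_right_complex, OldCStarModule.inner_op_smul_right,
    OldCStarModule.inner_op_smul_right, OldCStarModule.inner_smul_right_complex, smul_mul_assoc]

private lemma op_smul_op_smul' (x : E) (a b : A) : x <• (a * b) = (x <• a) <• b := by
  rw [MulOpposite.op_mul, mul_smul]

private lemma norm_op_smul_le' (x : E) (a : A) : ‖x <• a‖ ≤ ‖x‖ * ‖a‖ := by
  have h : ‖x <• a‖ ^ 2 = ‖star a * ⟪x, x⟫ * a‖ := by
    rw [OldCStarModule.norm_sq_eq (A := A)]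
    congr 1
    rw [OldCStarModule.inner_op_smul_right, OldCStarModule.inner_op_smul_left, mul_assoc]
  have h2 : ‖star a * ⟪x, x⟫ * a‖ ≤ (‖x‖ * ‖a‖) ^ 2 := by
    calc ‖star a * ⟪x, x⟫ * a‖ ≤ ‖star a * ⟪x, x⟫‖ * ‖a‖ := norm_mul_le _ _
      _ ≤ ‖star a‖ * ‖⟪x, x⟫‖ * ‖a‖ := by gcongr; exact norm_mul_le _ _
      _ = ‖a‖ * ‖x‖ ^ 2 * ‖a‖ := by rw [norm_star, OldCStarModule.norm_sq_eq (A := A)]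
      _ = (‖x‖ * ‖a‖) ^ 2 := by ring
  nlinarith [h, h2, norm_nonneg (x <• a), mul_nonneg (norm_nonneg x) (norm_nonneg (a : A))]

/-- Right multiplication by `a` as a continuous linear map. -/
private noncomputable def opSmulCLM (a : A) : E →L[ℂ] E :=
  LinearMap.mkContinuous
    { toFun := fun y => y <• a
      map_add' := fun x y => smul_add _ x y
      map_smul' := fun c x => (smul_op_comm' c a x).symm }
    ‖a‖ (fun x => by simpa [mul_comm] using norm_op_smul_le' x a)

@[simp] private lemma opSmulCLM_apply (a : A) (x : E) : opSmulCLM (E := E) a x = x <• a := rfl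

/-- Every element of `compactOp` is a module map for the right `A`-action. -/
private lemma compactOp_op_smul {C : E →L[ℂ] E} (hC : C ∈ compactOp A E) (x : E) (a : A) :
    C (x <• a) = C x <• a := by
  set S : Set (E →L[ℂ] E) := {T | ∀ x : E, ∀ a : A, T (x <• a) = T x <• a} with hS
  have hclosed : IsClosed S := by
    have : S = ⋂ (x : E), ⋂ (a : A),
        (fun T : E →L[ℂ] E =>
          (ContinuousLinearMap.apply ℂ E (x <• a)) T
            - (opSmulCLM a) (ContinuousLinearMap.apply ℂ E x T)) ⁻¹' {0} := by
      ext T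
      simp only [Set.mem_iInter, Set.mem_preimage, Set.mem_singleton_iff, sub_eq_zero, hS,
        ContinuousLinearMap.apply_apply, Set.mem_setOf_eq, opSmulCLM_apply]
    rw [this]
    refine isClosed_iInter fun x => isClosed_iInter fun a => IsClosed.preimage ?_ isClosed_singleton
    exact ((ContinuousLinearMap.apply ℂ E (x <• a)).continuous.sub
      ((opSmulCLM a).continuous.comp (ContinuousLinearMap.apply ℂ E x).continuous))
  have hspan : (Submodule.span ℂ {T : E →L[ℂ] E | IsRankOne A E T} : Set (E →L[ℂ] E)) ⊆ S := by
    intro T hT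
    induction hT using Submodule.span_induction with
    | mem T hT =>
        obtain ⟨u, v, huv⟩ := hT
        intro x a
        rw [huv, huv, OldCStarModule.inner_op_smul_right, op_smul_op_smul']
    | zero => intro x a; simp
    | add T₁ T₂ _ _ h1 h2 =>
        intro x a
        simp only [ContinuousLinearMap.add_apply, h1 x a, h2 x a, smul_add]
    | smul c T _ h =>
        intro x a
        simp only [ContinuousLinearMap.coe_smul', Pi.smul_apply, h x a, smul_op_comm']
  exact (closure_minimal hspan hclosed) hC x a

private lemma norm_weak_limit_le {ζ : ℕ → E} {z : E} {M : ℝ}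
    (hb : ∀ k, ‖ζ k‖ ≤ M)
    (hw : ∀ v : E, Tendsto (fun k => ⟪v, ζ k⟫) atTop (nhds ⟪v, z⟫)) : ‖z‖ ≤ M := by
  have h1 : Tendsto (fun k => ‖⟪z, ζ k⟫‖) atTop (nhds ‖⟪z, z⟫‖) := (hw z).norm
  have h2 : ‖⟪z, z⟫‖ ≤ ‖z‖ * M := by
    refine le_of_tendsto h1 (Eventually.of_forall fun k => ?_)
    calc ‖⟪z, ζ k⟫‖ ≤ ‖z‖ * ‖ζ k‖ := OldCStarModule.norm_inner_le E
      _ ≤ ‖z‖ * M := by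
          rcases le_or_gt ‖z‖ 0 with h | h
          · have hz : ‖z‖ = 0 := le_antisymm h (norm_nonneg z)
            simp [hz]
          · exact mul_le_mul_of_nonneg_left (hb k) h.le
  have h3 : ‖z‖ ^ 2 ≤ ‖z‖ * M := by rw [OldCStarModule.norm_sq_eq (A := A)]; exact h2
  rcases eq_or_lt_of_le (norm_nonneg z) with h | h
  · rw [← h]; exact le_trans (norm_nonneg (ζ 0)) (hb 0)
  · nlinarith

/-- compact operators map bounded weakly convergent sequences to norm convergent ones. -/
private lemma compact_weak_to_norm {C : E →L[ℂ] E} (hC : C ∈ compactOp A E) {ζ : ℕ → E} {z : E}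
    {M : ℝ} (hb : ∀ k, ‖ζ k‖ ≤ M)
    (hw : ∀ v : E, Tendsto (fun k => ⟪v, ζ k⟫) atTop (nhds ⟪v, z⟫)) :
    Tendsto (fun k => C (ζ k)) atTop (nhds (C z)) := by
  have hM0 : 0 ≤ M := le_trans (norm_nonneg (ζ 0)) (hb 0)
  have hzM : ‖z‖ ≤ M := norm_weak_limit_le hb hw
  have hspan : ∀ T ∈ (Submodule.span ℂ {T : E →L[ℂ] E | IsRankOne A E T} : Set (E →L[ℂ] E)),
      Tendsto (fun k => T (ζ k)) atTop (nhds (T z)) := by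
    intro T hT
    induction hT using Submodule.span_induction with
    | mem T hT =>
        obtain ⟨u, v, huv⟩ := hT
        simp only [huv]
        rw [tendsto_iff_norm_sub_tendsto_zero]
        have hb2 : ∀ k, ‖u <• ⟪v, ζ k⟫ - u <• ⟪v, z⟫‖ ≤ ‖u‖ * ‖⟪v, ζ k⟫ - ⟪v, z⟫‖ := by
          intro k
          have he : u <• ⟪v, ζ k⟫ - u <• ⟪v, z⟫ = u <• (⟪v, ζ k⟫ - ⟪v, z⟫) := by
            rw [MulOpposite.op_sub, sub_smul]
          rw [he]
          exact norm_op_smul_le' u _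
        have h0 : Tendsto (fun k => ‖u‖ * ‖⟪v, ζ k⟫ - ⟪v, z⟫‖) atTop (nhds 0) := by
          simpa using (((hw v).sub_const (⟪v, z⟫)).norm.const_mul ‖u‖)
        exact squeeze_zero (fun k => norm_nonneg _) hb2 h0
    | zero => simpa using tendsto_const_nhds
    | add T₁ T₂ _ _ h1 h2 => simpa using h1.add h2
    | smul c T _ h => simpa using h.const_smul c
  rw [Metric.tendsto_atTop]
  intro ε hε
  have hε3 : 0 < ε / 3 := by linarith
  obtain ⟨T, hTmem, hTC⟩ : ∃ T ∈ (Submodule.span ℂ {T : E →L[ℂ] E | IsRankOne A E T} :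
      Set (E →L[ℂ] E)), ‖C - T‖ < ε / (3 * (M + 1)) := by
    have := Metric.mem_closure_iff.mp hC (ε / (3 * (M + 1))) (by positivity)
    obtain ⟨T, hT, hd⟩ := this
    exact ⟨T, hT, by rwa [dist_eq_norm] at hd⟩
  obtain ⟨N, hN⟩ := (Metric.tendsto_atTop.mp (hspan T hTmem)) (ε / 3) hε3
  refine ⟨N, fun k hk => ?_⟩
  rw [dist_eq_norm]
  have key : ∀ w : E, ‖w‖ ≤ M → ‖C w - T w‖ ≤ ε / 3 := by
    intro w hwM
    calc ‖C w - T w‖ = ‖(C - T) w‖ := by simp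
      _ ≤ ‖C - T‖ * ‖w‖ := (C - T).le_opNorm w
      _ ≤ (ε / (3 * (M + 1))) * (M + 1) := by
          apply mul_le_mul hTC.le (by linarith) (norm_nonneg w) (by positivity)
      _ = ε / 3 := by field_simp
  have h1 := key (ζ k) (hb k)
  have h2 := key z hzM
  have h3 : ‖T (ζ k) - T z‖ < ε / 3 := by
    have := hN k hk
    rwa [dist_eq_norm] at this
  have habel : C (ζ k) - C z = (C (ζ k) - T (ζ k)) + (T (ζ k) - T z) + (T z - C z) := by abel
  calc ‖C (ζ k) - C z‖
      = ‖(C (ζ k) - T (ζ k)) + (T (ζ k) - T z) + (T z - C z)‖ := by rw [habel]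
    _ ≤ ‖C (ζ k) - T (ζ k)‖ + ‖T (ζ k) - T z‖ + ‖T z - C z‖ := norm_add₃_le
    _ < ε / 3 + ε / 3 + ε / 3 := by
        have h2' : ‖T z - C z‖ ≤ ε / 3 := by rwa [norm_sub_rev]
        linarith
    _ = ε := by ring

/-- The key extraction lemma. -/
private lemma key_subseq (hH : PropertyH A E) {C : E →L[ℂ] E} (hC : C ∈ compactOp A E)
    {ζ : ℕ → E} {M : ℝ} (hb : ∀ k, ‖ζ k‖ ≤ M) :
    ∃ φ : ℕ → ℕ, StrictMono φ ∧ ∃ z : E,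
      (∀ v : E, Tendsto (fun k => ⟪v, ζ (φ k)⟫) atTop (nhds ⟪v, z⟫)) ∧
      Tendsto (fun k => C (ζ (φ k))) atTop (nhds (C z)) := by
  have hbdd : Bornology.IsBounded (Set.range ζ) := by
    rw [isBounded_iff_forall_norm_le]
    exact ⟨M, by rintro x ⟨k, rfl⟩; exact hb k⟩
  obtain ⟨φ, hφ, z, hw⟩ := hH ζ hbdd
  exact ⟨φ, hφ, z, hw, compact_weak_to_norm hC (fun k => hb (φ k)) hw⟩

private lemma le_infDist' {S : Set E} (hS : S.Nonempty) {x : E} {r : ℝ}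
    (h : ∀ y ∈ S, r ≤ dist x y) : r ≤ Metric.infDist x S := by
  by_contra hlt
  push_neg at hlt
  obtain ⟨y, hy, hd⟩ := (Metric.infDist_lt_iff hS).mp hlt
  exact absurd hd (not_lt.2 (h y hy))

private lemma infDist_sub_mem' {S : Set E} (hadd : ∀ m ∈ S, ∀ n ∈ S, m - n ∈ S)
    (hS : S.Nonempty) (x : E) {n : E} (hn : n ∈ S) :
    Metric.infDist (x - n) S = Metric.infDist x S := by
  have key : ∀ (y w : E), w ∈ S → Metric.infDist (y - w) S ≤ Metric.infDist y S := by
    intro y w hw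
    refine le_infDist' hS fun m hm => ?_
    have h1 : Metric.infDist (y - w) S ≤ dist (y - w) (m - w) :=
      Metric.infDist_le_dist_of_mem (hadd m hm w hw)
    simpa [dist_eq_norm, sub_sub_sub_cancel_right] using h1
  have h1 := key x n hn
  have hmn : -n ∈ S := by simpa using hadd 0 (by simpa using hadd n hn n hn) n hn
  have h2 := key (x - n) (-n) hmn
  simp only [sub_neg_eq_add, sub_add_cancel] at h2
  exact le_antisymm h1 h2

private lemma infDist_smul_pos' {S : Set E} (hsmul : ∀ c : ℂ, ∀ m ∈ S, c • m ∈ S)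
    (hS : S.Nonempty) (x : E) {r : ℝ} (hr : 0 < r) :
    Metric.infDist ((r : ℂ) • x) S = r * Metric.infDist x S := by
  have key : ∀ (y : E) {t : ℝ}, 0 < t →
      Metric.infDist ((t : ℂ) • y) S ≤ t * Metric.infDist y S := by
    intro y t ht
    have h : Metric.infDist ((t : ℂ) • y) S / t ≤ Metric.infDist y S := by
      refine le_infDist' hS fun m hm => ?_
      rw [div_le_iff₀ ht]
      have h1 : Metric.infDist ((t : ℂ) • y) S ≤ dist ((t : ℂ) • y) ((t : ℂ) • m) :=
        Metric.infDist_le_dist_of_mem (hsmul _ m hm)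
      calc Metric.infDist ((t : ℂ) • y) S ≤ dist ((t : ℂ) • y) ((t : ℂ) • m) := h1
        _ = ‖(t : ℂ)‖ * dist y m := dist_smul₀ _ _ _
        _ = dist y m * t := by
            rw [Complex.norm_real, Real.norm_of_nonneg ht.le]; ring
    calc Metric.infDist ((t : ℂ) • y) S = (Metric.infDist ((t : ℂ) • y) S / t) * t := by
          field_simp
      _ ≤ Metric.infDist y S * t := mul_le_mul_of_nonneg_right h ht.le
      _ = t * Metric.infDist y S := by ring
  refine le_antisymm (key x hr) ?_
  have h2 := key ((r : ℂ) • x) (t := r⁻¹) (by positivity)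
  have h3 : ((r⁻¹ : ℝ) : ℂ) • ((r : ℝ) : ℂ) • x = x := by
    rw [smul_smul, ← Complex.ofReal_mul, inv_mul_cancel₀ hr.ne', Complex.ofReal_one, one_smul]
  rw [h3] at h2
  calc r * Metric.infDist x S ≤ r * (r⁻¹ * Metric.infDist ((r : ℂ) • x) S) := by
        have := mul_le_mul_of_nonneg_left h2 hr.le
        simpa using this
    _ = Metric.infDist ((r : ℂ) • x) S := by field_simp

variable (A E)

/-- if `L = I − C` is not injective, then `Ker(L)` is a nonzero finitely
generated submodule and `Ran(L)` is a proper closed submodule of `E`. -/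
theorem stmt14 [CompleteSpace E] (hH : PropertyH A E) (C : E →L[ℂ] E) (hC : C ∈ compactOp A E)
    (hninj : ¬ Function.Injective ⇑(1 - C : E →L[ℂ] E)) :
    (∃ x : E, x ≠ 0 ∧ (1 - C) x = 0) ∧
    (∃ s : Finset E, (↑s ⊆ {x : E | (1 - C) x = 0}) ∧
      {x : E | (1 - C) x = 0} = (Submodule.span Aᵐᵒᵖ (s : Set E) : Set E)) ∧
    IsClosed (Set.range ⇑(1 - C : E →L[ℂ] E)) ∧
    Set.range ⇑(1 - C : E →L[ℂ] E) ≠ Set.univ := by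
  classical
  set L : E →L[ℂ] E := 1 - C with hLdef
  have hLapply : ∀ x : E, L x = x - C x := fun x => by
    simp [hLdef, ContinuousLinearMap.sub_apply]
  have hCapply : ∀ x : E, C x = x - L x := fun x => by rw [hLapply]; abel
  have hfix : ∀ x : E, L x = 0 → C x = x := fun x hx => by rw [hCapply, hx, sub_zero]
  set S : Set E := {x : E | L x = 0} with hSdef
  have hS0 : (0 : E) ∈ S := by simp [hSdef]
  have hSne : S.Nonempty := ⟨0, hS0⟩
  have hSsub : ∀ m ∈ S, ∀ n ∈ S, m - n ∈ S := by
    intro m hm n hn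
    simp only [hSdef, Set.mem_setOf_eq] at *
    rw [map_sub, hm, hn, sub_zero]
  have hSsmul : ∀ c : ℂ, ∀ m ∈ S, c • m ∈ S := by
    intro c m hm
    simp only [hSdef, Set.mem_setOf_eq] at *
    rw [map_smul, hm, smul_zero]
  have hSclosed : IsClosed S := by
    have : S = ⇑L ⁻¹' {0} := rfl
    rw [this]
    exact IsClosed.preimage L.continuous isClosed_singleton
  -- Part 1 : nonzero kernel
  obtain ⟨a, b, hab, hne⟩ := Function.not_injective_iff.mp hninj
  have hker : ∃ x : E, x ≠ 0 ∧ L x = 0 :=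
    ⟨a - b, sub_ne_zero.mpr hne, by rw [map_sub, hab, sub_self]⟩
  -- Lower bound
  have hlb : ∃ c : ℝ, 0 < c ∧ ∀ x : E, c * Metric.infDist x S ≤ ‖L x‖ := by
    by_contra hcon
    push_neg at hcon
    have hex : ∀ k : ℕ, ∃ x : E, ‖L x‖ < (1 / (k + 1 : ℝ)) * Metric.infDist x S := by
      intro k
      obtain ⟨x, hx⟩ := hcon (1 / (k + 1 : ℝ)) (by positivity)
      exact ⟨x, hx⟩
    choose x hx using hex
    set d : ℕ → ℝ := fun k => Metric.infDist (x k) S with hd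
    have hdk : ∀ k, Metric.infDist (x k) S = d k := fun k => rfl
    have hd0 : ∀ k, 0 ≤ d k := fun k => Metric.infDist_nonneg
    have hdpos : ∀ k, 0 < d k := by
      intro k
      rcases lt_or_eq_of_le (hd0 k) with h | h
      · exact h
      · exfalso
        have h2 := hx k
        rw [hdk k, ← h, mul_zero] at h2
        exact absurd h2 (not_lt.2 (norm_nonneg _))
    have hex2 : ∀ k : ℕ, ∃ n ∈ S, dist (x k) n < 2 * d k := by
      intro k
      refine (Metric.infDist_lt_iff hSne).mp ?_
      rw [hdk k]
      linarith [hdpos k]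
    choose n hnS hnd using hex2
    set y : ℕ → E := fun k => (((d k)⁻¹ : ℝ) : ℂ) • (x k - n k) with hy
    have hyn : ∀ k, ‖y k‖ ≤ 2 := by
      intro k
      rw [hy]
      simp only [norm_smul, Complex.norm_real, Real.norm_eq_abs,
        abs_of_pos (inv_pos.mpr (hdpos k))]
      have h1 : ‖x k - n k‖ < 2 * d k := by
        have := hnd k
        rwa [dist_eq_norm] at this
      calc (d k)⁻¹ * ‖x k - n k‖ ≤ (d k)⁻¹ * (2 * d k) := by
            apply mul_le_mul_of_nonneg_left h1.le (inv_nonneg.mpr (hd0 k))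
        _ = 2 := by
            rw [mul_comm 2 (d k), ← mul_assoc, inv_mul_cancel₀ (hdpos k).ne', one_mul]
    have hLy : ∀ k, ‖L (y k)‖ ≤ 1 / (k + 1 : ℝ) := by
      intro k
      have h1 : L (y k) = (((d k)⁻¹ : ℝ) : ℂ) • (L (x k)) := by
        rw [hy, map_smul, map_sub]
        have : L (n k) = 0 := hnS k
        rw [this, sub_zero]
      rw [h1]
      simp only [norm_smul, Complex.norm_real, Real.norm_eq_abs,
        abs_of_pos (inv_pos.mpr (hdpos k))]
      have hx' : ‖L (x k)‖ ≤ (1 / (k + 1 : ℝ)) * d k := by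
        have h2 := hx k
        rw [hdk k] at h2
        exact h2.le
      calc (d k)⁻¹ * ‖L (x k)‖ ≤ (d k)⁻¹ * ((1 / (k + 1 : ℝ)) * d k) := by
            apply mul_le_mul_of_nonneg_left hx' (inv_nonneg.mpr (hd0 k))
        _ = 1 / (k + 1 : ℝ) := by
            rw [mul_comm (1 / (k + 1 : ℝ)) (d k), ← mul_assoc,
              inv_mul_cancel₀ (hdpos k).ne', one_mul]
    have hdy : ∀ k, Metric.infDist (y k) S = 1 := by
      intro k
      rw [hy]
      rw [infDist_smul_pos' hSsmul hSne _ (inv_pos.mpr (hdpos k))]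
      rw [infDist_sub_mem' hSsub hSne _ (hnS k), hdk k]
      exact inv_mul_cancel₀ (hdpos k).ne'
    obtain ⟨φ, hφ, z, hwk, hcc⟩ := key_subseq hH hC hyn
    have hL0 : Tendsto (fun k => L (y (φ k))) atTop (nhds 0) := by
      apply squeeze_zero_norm (fun k => ?_) tendsto_one_div_add_atTop_nhds_zero_nat
      calc ‖L (y (φ k))‖ ≤ 1 / (φ k + 1 : ℝ) := hLy (φ k)
        _ ≤ 1 / (k + 1 : ℝ) := by
            have hk : k ≤ φ k := hφ.le_apply
            apply one_div_le_one_div_of_le (by positivity)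
            exact_mod_cast Nat.succ_le_succ hk
    have hyconv : Tendsto (fun k => y (φ k)) atTop (nhds (C z)) := by
      have h1 := hL0.add hcc
      rw [zero_add] at h1
      have h2 : (fun k => L (y (φ k)) + C (y (φ k))) = fun k => y (φ k) := by
        funext k
        rw [hLapply]
        abel
      rwa [h2] at h1
    have hCzS : C z ∈ S := by
      have h1 : Tendsto (fun k => L (y (φ k))) atTop (nhds (L (C z))) :=
        (L.continuous.tendsto (C z)).comp hyconv
      have h2 : L (C z) = 0 := tendsto_nhds_unique h1 hL0
      exact h2
    have hcontra : Tendsto (fun k => Metric.infDist (y (φ k)) S) atTop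
        (nhds (Metric.infDist (C z) S)) :=
      ((Metric.continuous_infDist_pt S).tendsto (C z)).comp hyconv
    have h3 : (fun k => Metric.infDist (y (φ k)) S) = fun _ => (1 : ℝ) := by
      funext k; exact hdy (φ k)
    rw [h3, Metric.infDist_zero_of_mem hCzS] at hcontra
    have := tendsto_nhds_unique hcontra (tendsto_const_nhds)
    norm_num at this
  -- Part 3 : closed range
  have hclosedrange : IsClosed (Set.range ⇑L) := by
    obtain ⟨c, hc, hcb⟩ := hlb
    refine IsSeqClosed.isClosed ?_
    intro u yy hu huy
    choose w hw using hu
    have hubdd : ∃ B : ℝ, ∀ k, ‖u k‖ ≤ B := by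
      have h1 : Bornology.IsBounded (Set.range u) := Metric.isBounded_range_of_tendsto u huy
      obtain ⟨B, hB⟩ := isBounded_iff_forall_norm_le.mp h1
      exact ⟨B, fun k => hB _ ⟨k, rfl⟩⟩
    obtain ⟨B, hB⟩ := hubdd
    have hex2 : ∀ k : ℕ, ∃ n ∈ S, dist (w k) n < Metric.infDist (w k) S + 1 := by
      intro k
      refine (Metric.infDist_lt_iff hSne).mp ?_
      linarith [Metric.infDist_nonneg (x := w k) (s := S)]
    choose n hnS hnd using hex2
    set w' : ℕ → E := fun k => w k - n k with hw'
    have hLw' : ∀ k, L (w' k) = u k := by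
      intro k
      rw [hw']
      simp only
      rw [map_sub]
      have : L (n k) = 0 := hnS k
      rw [this, sub_zero, hw k]
    have hw'b : ∀ k, ‖w' k‖ ≤ c⁻¹ * B + 1 := by
      intro k
      have h1 : ‖w' k‖ < Metric.infDist (w k) S + 1 := by
        have := hnd k
        rwa [dist_eq_norm] at this
      have h2 : c * Metric.infDist (w k) S ≤ ‖L (w k)‖ := hcb (w k)
      rw [hw k] at h2
      have h3 : Metric.infDist (w k) S ≤ c⁻¹ * ‖u k‖ := by
        have h5 := (le_div_iff₀' hc).mpr h2
        rwa [div_eq_inv_mul] at h5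
      have h4 : c⁻¹ * ‖u k‖ ≤ c⁻¹ * B :=
        mul_le_mul_of_nonneg_left (hB k) (inv_nonneg.mpr hc.le)
      linarith
    obtain ⟨φ, hφ, z, hwk, hcc⟩ := key_subseq hH hC hw'b
    have hLconv : Tendsto (fun k => L (w' (φ k))) atTop (nhds yy) := by
      have h1 : (fun k => L (w' (φ k))) = fun k => u (φ k) := funext fun k => hLw' (φ k)
      rw [h1]
      exact huy.comp hφ.tendsto_atTop
    have hw'conv : Tendsto (fun k => w' (φ k)) atTop (nhds (yy + C z)) := by
      have h1 := hLconv.add hcc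
      have h2 : (fun k => L (w' (φ k)) + C (w' (φ k))) = fun k => w' (φ k) := by
        funext k
        rw [hLapply]
        abel
      rwa [h2] at h1
    have hfinal : L (yy + C z) = yy := by
      have h1 : Tendsto (fun k => L (w' (φ k))) atTop (nhds (L (yy + C z))) :=
        (L.continuous.tendsto _).comp hw'conv
      exact tendsto_nhds_unique h1 hLconv
    exact ⟨yy + C z, hfinal⟩

  -- Part 2 : finitely generated kernel
  have hfg : ∃ s : Finset E, (↑s ⊆ S) ∧ S = (Submodule.span Aᵐᵒᵖ (s : Set E) : Set E) := by
    set N : Submodule ℂ E := LinearMap.ker (L : E →ₗ[ℂ] E) with hN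
    have hNS : (N : Set E) = S := by
      ext v
      simp [hN, LinearMap.mem_ker, hSdef]
    have hNclosed : IsClosed (N : Set E) := by rw [hNS]; exact hSclosed
    -- the closed unit ball of the kernel is sequentially compact
    have hseq : IsSeqCompact (Metric.closedBall (0 : ↥N) 1) := by
      intro xs hxs
      have hb : ∀ k, ‖((xs k : E))‖ ≤ 1 := by
        intro k
        have h1 := hxs k
        rw [Metric.mem_closedBall, dist_zero_right] at h1
        exact h1
      obtain ⟨φ, hφ, z, hwk, hcc⟩ := key_subseq hH hC hb
      have hfix2 : ∀ k, C ((xs (φ k) : E)) = ((xs (φ k) : E)) := by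
        intro k
        apply hfix
        exact LinearMap.mem_ker.mp (xs (φ k)).2
      have hconv : Tendsto (fun k => ((xs (φ k) : E))) atTop (nhds (C z)) := by
        have h1 : (fun k => C ((xs (φ k) : E))) = fun k => ((xs (φ k) : E)) :=
          funext fun k => hfix2 k
        rwa [h1] at hcc
      have hmem : C z ∈ N :=
        hNclosed.mem_of_tendsto hconv (Eventually.of_forall fun k => (xs (φ k)).2)
      have hnorm : ‖C z‖ ≤ 1 :=
        le_of_tendsto hconv.norm (Eventually.of_forall fun k => hb (φ k))
      refine ⟨⟨C z, hmem⟩, ?_, φ, hφ, ?_⟩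
      · rw [Metric.mem_closedBall, dist_zero_right]
        exact hnorm
      · rw [tendsto_subtype_rng]
        exact hconv
    have hcpt : IsCompact (Metric.closedBall (0 : ↥N) 1) := hseq.isCompact
    have hfd : FiniteDimensional ℂ ↥N := .of_isCompact_closedBall₀ ℂ one_pos hcpt
    obtain ⟨Sfin, hSfin⟩ := Module.finite_def.mp hfd
    set t : Finset E := Sfin.image (Subtype.val) with ht
    have htN : Submodule.span ℂ (↑t : Set E) = N := by
      rw [ht, Finset.coe_image]
      have himg : (Subtype.val '' (↑Sfin : Set ↥N) : Set E) = ⇑N.subtype '' ↑Sfin := rfl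
      rw [himg, ← Submodule.map_span, hSfin, Submodule.map_subtype_top]
    have htS : (↑t : Set E) ⊆ S := by
      intro v hv
      have h1 : v ∈ Submodule.span ℂ (↑t : Set E) := Submodule.subset_span hv
      rw [htN] at h1
      exact hNS ▸ (h1 : v ∈ (N : Set E))
    refine ⟨t, htS, ?_⟩
    apply Set.eq_of_subset_of_subset
    · -- S ⊆ span Aᵐᵒᵖ t
      intro v hv
      have hv1 : v ∈ Submodule.span ℂ (↑t : Set E) := by
        rw [htN]
        exact (show v ∈ (N : Set E) from hNS ▸ hv)
      clear hv
      induction hv1 using Submodule.span_induction with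
      | mem w hw => exact Submodule.subset_span hw
      | zero => exact Submodule.zero_mem _
      | add w₁ w₂ _ _ h1 h2 => exact Submodule.add_mem _ h1 h2
      | smul c w _ h =>
          rw [smul_eq_op' (A := A) c w]
          exact Submodule.smul_mem _ (MulOpposite.op (c • (1 : A))) h
    · -- span Aᵐᵒᵖ t ⊆ S
      intro v hv
      induction hv using Submodule.span_induction with
      | mem w hw => exact htS hw
      | zero => exact hS0
      | add w₁ w₂ _ _ h1 h2 =>
          have h1' : L w₁ = 0 := h1
          have h2' : L w₂ = 0 := h2
          show L (w₁ + w₂) = 0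
          rw [map_add, h1', h2', add_zero]
      | smul a w _ h =>
          have h' : L w = 0 := h
          show L (a • w) = 0
          have ha : a • w = w <• (MulOpposite.unop a) := by rw [MulOpposite.op_unop]
          rw [ha]
          have hLsm : L (w <• (MulOpposite.unop a)) = (L w) <• (MulOpposite.unop a) := by
            rw [hLapply, hLapply, compactOp_op_smul hC, smul_sub]
          rw [hLsm, h', smul_zero]

  -- Part 4 : proper range
  have hproper : Set.range ⇑L ≠ Set.univ := by
    intro hsurj
    have hsur : ∀ yv : E, ∃ xv, L xv = yv := by
      intro yv
      have h1 : yv ∈ Set.range ⇑L := by rw [hsurj]; trivial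
      exact h1
    obtain ⟨x₀, hx₀ne, hx₀⟩ := hker
    set x : ℕ → E := fun k => Nat.rec x₀ (fun _ xk => Classical.choose (hsur xk)) k with hxdef
    have hx0 : x 0 = x₀ := rfl
    have hxs : ∀ k, L (x (k + 1)) = x k := fun k => Classical.choose_spec (hsur (x k))
    have hpow1 : ∀ k, (L ^ k) (x k) = x₀ := by
      intro k
      induction k with
      | zero => simpa using hx0
      | succ m ih => rw [pow_succ, ContinuousLinearMap.mul_apply, hxs m, ih]
    have hpow0 : ∀ k, (L ^ (k + 1)) (x k) = 0 := by
      intro k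
      induction k with
      | zero => rw [pow_one, hx0, hx₀]
      | succ m ih => rw [pow_succ, ContinuousLinearMap.mul_apply, hxs m, ih]
    set F : ℕ → Submodule ℂ E := fun k => LinearMap.ker ((L ^ k : E →L[ℂ] E) : E →ₗ[ℂ] E) with hF
    have hFmem : ∀ k (v : E), v ∈ F k ↔ (L ^ k) v = 0 := fun k v => LinearMap.mem_ker
    have hFmono : ∀ {j k : ℕ}, j ≤ k → F j ≤ F k := by
      intro j k hjk v hv
      rw [hFmem] at hv ⊢
      obtain ⟨m, rfl⟩ : ∃ m, k = m + j := ⟨k - j, by omega⟩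
      rw [pow_add, ContinuousLinearMap.mul_apply, hv, map_zero]
    have hFclosed : ∀ k, IsClosed ((F k : Set E)) := fun k => ContinuousLinearMap.isClosed_ker (L ^ k)
    have hLF : ∀ k (v : E), v ∈ F (k + 1) → L v ∈ F k := by
      intro k v hv
      rw [hFmem] at hv ⊢
      rw [← ContinuousLinearMap.mul_apply, ← pow_succ]
      exact hv
    -- Riesz construction
    have hriesz : ∀ k : ℕ, ∃ v : E, v ∈ F (k + 1) ∧ ‖v‖ = 1 ∧
        ∀ y ∈ F k, (3 / 4 : ℝ) ≤ ‖v - y‖ := by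
      intro k
      set G : Submodule ℂ ↥(F (k + 1)) := (F k).comap (F (k + 1)).subtype with hG
      have hGc : IsClosed (G : Set ↥(F (k + 1))) := by
        have h1 : IsClosed ((F k : Set E)) := hFclosed k
        exact h1.preimage continuous_subtype_val
      have hex : ∃ u : ↥(F (k + 1)), u ∉ G := by
        refine ⟨⟨x k, (hFmem _ _).mpr (hpow0 k)⟩, fun hmem => ?_⟩
        have h1 : x k ∈ F k := hmem
        rw [hFmem] at h1
        rw [hpow1 k] at h1
        exact hx₀ne h1
      obtain ⟨u, huG, hu⟩ := riesz_lemma hGc hex (show (3/4 : ℝ) < 1 by norm_num)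
      have hune : (u : E) ≠ 0 := by
        intro h0
        apply huG
        have : u = 0 := Subtype.coe_injective (by simpa using h0)
        rw [this]
        exact Submodule.zero_mem G
      set tt : ℝ := ‖(u : E)‖ with htt
      have httpos : 0 < tt := norm_pos_iff.mpr hune
      refine ⟨((tt⁻¹ : ℝ) : ℂ) • (u : E), Submodule.smul_mem _ _ u.2, ?_, ?_⟩
      · rw [norm_smul, Complex.norm_real, Real.norm_eq_abs, abs_of_pos (inv_pos.mpr httpos)]
        exact inv_mul_cancel₀ httpos.ne'
      · intro y hy
        have hyk1 : y ∈ F (k + 1) := hFmono (Nat.le_succ k) hy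
        have hty : ((tt : ℝ) : ℂ) • y ∈ F k := Submodule.smul_mem _ _ hy
        have hty1 : ((tt : ℝ) : ℂ) • y ∈ F (k + 1) := Submodule.smul_mem _ _ hyk1
        have hmemG : (⟨((tt : ℝ) : ℂ) • y, hty1⟩ : ↥(F (k + 1))) ∈ G := hty
        have h2 := hu _ hmemG
        have hnormeq : ‖u - (⟨((tt : ℝ) : ℂ) • y, hty1⟩ : ↥(F (k + 1)))‖
            = ‖(u : E) - ((tt : ℝ) : ℂ) • y‖ := rfl
        rw [hnormeq] at h2
        have h3 : (u : E) - ((tt : ℝ) : ℂ) • y = ((tt : ℝ) : ℂ) • (((tt⁻¹ : ℝ) : ℂ) • (u : E) - y) := by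
          rw [smul_sub, smul_smul, ← Complex.ofReal_mul, mul_inv_cancel₀ httpos.ne',
            Complex.ofReal_one, one_smul]
        rw [h3, norm_smul, Complex.norm_real, Real.norm_eq_abs, abs_of_pos httpos] at h2
        have httne : tt ≠ 0 := httpos.ne'
        have hnum : 3 / 4 * tt ≤ tt * ‖((tt⁻¹ : ℝ) : ℂ) • (u : E) - y‖ := by
          calc (3 : ℝ) / 4 * tt = 3 / 4 * ‖(u : E)‖ := rfl
            _ ≤ tt * ‖((tt⁻¹ : ℝ) : ℂ) • (u : E) - y‖ := h2
        have hmul := mul_le_mul_of_nonneg_right hnum (inv_nonneg.mpr httpos.le)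
        have hLh : (3 / 4 * tt) * tt⁻¹ = (3 / 4 : ℝ) := by
          rw [mul_assoc, mul_inv_cancel₀ httne, mul_one]
        have hRh : (tt * ‖((tt⁻¹ : ℝ) : ℂ) • (u : E) - y‖) * tt⁻¹
            = ‖((tt⁻¹ : ℝ) : ℂ) • (u : E) - y‖ := by
          rw [mul_comm tt, mul_assoc, mul_inv_cancel₀ httne, mul_one]
        rw [hLh, hRh] at hmul
        exact hmul
    choose v hvF hvnorm hvdist using hriesz
    have hvb : ∀ k, ‖v k‖ ≤ 1 := fun k => (hvnorm k).le
    obtain ⟨φ, hφ, z, hwk, hcc⟩ := key_subseq hH hC hvb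
    have hcau : CauchySeq (fun k => C (v (φ k))) := hcc.cauchySeq
    obtain ⟨NN, hNN⟩ := Metric.cauchySeq_iff.mp hcau (3 / 4) (by norm_num)
    set aa : ℕ := φ NN with haa
    set bb : ℕ := φ (NN + 1) with hbb
    have habl : aa < bb := hφ (Nat.lt_succ_self NN)
    have hdistlt : ‖C (v bb) - C (v aa)‖ < 3 / 4 := by
      have h1 := hNN (NN + 1) (Nat.le_succ NN) NN le_rfl
      rwa [dist_eq_norm] at h1
    -- contradiction
    have hyF : L (v bb) + v aa - L (v aa) ∈ F bb := by
      refine Submodule.sub_mem _ (Submodule.add_mem _ ?_ ?_) ?_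
      · exact hLF bb (v bb) (hvF bb)
      · exact hFmono habl (hvF aa)
      · exact hFmono (Nat.le_of_lt habl) (hLF aa (v aa) (hvF aa))
    have hge := hvdist bb _ hyF
    have heq : v bb - (L (v bb) + v aa - L (v aa)) = C (v bb) - C (v aa) := by
      rw [hCapply (v bb), hCapply (v aa)]
      abel
    rw [heq] at hge
    linarith

  exact ⟨hker, hfg, hclosedrange, hproper⟩

end
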